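/- arXiv:1508.06448 — 2 statements merged into one kernel-verified Lean document; each statement's English description precedes it below -/
import Mathlib

section
/- A population p obeying the master equation at all internal states (i.e., ∑_j H_{ij} p_j = 0 for all i ∈ N − T) holds if and only if p minimizes the extended dissipation functional C subject to the constraint p|_T = b, where b = p|_T; equivalently, ∂C/∂p_i = 0 at all internal states i. -/
/-!
Write `C(p) = ¼ ∑ₑ rₑ q_{s e} (aₛ − aₜ)²` with `a = p / q`. This is a positive semidefinite
quadratic form, so `p` minimizes it on the affine space `p + V`, `V = {v | v = 0 on T}`, iff its
polar form `polar C p` vanishes on `V`; `polar C p` is also the Fréchet derivative of `C` at `p`.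
Detailed balance makes the edge weights `rₑ q_{s e}` invariant under reversing the edges, which
symmetrizes the polar form into `polar C p v = -∑ᵢ vᵢ (H p)ᵢ / qᵢ`. Hence both minimality and
stationarity amount to `(H p)ᵢ = 0` for every internal state `i`.
-/

open Finset Matrix

namespace QuadraticMap

theorem isMinOn_iff_polar_eq_zero {M : Type*} [AddCommGroup M] [Module ℝ M]
    (Q : QuadraticMap ℝ M ℝ) (hQ : ∀ v, 0 ≤ Q v) (V : Submodule ℝ M) (x : M) :
    IsMinOn Q {y | y - x ∈ V} x ↔ ∀ v ∈ V, polar Q x v = 0 := by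
  rw [isMinOn_iff]
  constructor
  · intro hmin v hv
    have hline : ∀ ε : ℝ, 0 ≤ Q v * (ε * ε) + polar Q x v * ε + 0 := fun ε => by
      have h := hmin (x + ε • v) (by simpa using V.smul_mem ε hv)
      rw [QuadraticMap.map_add (⇑Q), Q.map_smul, polar_smul_right, smul_eq_mul,
        smul_eq_mul] at h
      linarith
    have hdiscr := discrim_le_zero hline
    rw [discrim] at hdiscr
    nlinarith [sq_nonneg (polar Q x v)]
  · intro hpolar y hy
    have h := QuadraticMap.map_add (⇑Q) x (y - x)
    rw [add_sub_cancel, hpolar _ hy] at h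
    linarith [hQ (y - x)]

theorem fderiv_apply_eq_polar {M : Type*} [NormedAddCommGroup M] [NormedSpace ℝ M]
    (Q : QuadraticMap ℝ M ℝ) {x : M} (hQ : DifferentiableAt ℝ Q x) (v : M) :
    fderiv ℝ Q x v = polar Q x v := by
  rw [← hQ.lineDeriv_eq_fderiv, Q.lineDeriv]

end QuadraticMap

theorem forall_mem_pi_bot_dotProduct_eq_zero_iff {N : Type*} [Fintype N] [DecidableEq N]
    (T : Set N) (w : N → ℝ) :
    (∀ v ∈ Submodule.pi T (fun _ => (⊥ : Submodule ℝ ℝ)), v ⬝ᵥ w = 0) ↔ ∀ i ∉ T, w i = 0 := by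
  constructor
  · intro h i hi
    have hmem : Pi.single i 1 ∈ Submodule.pi T (fun _ => (⊥ : Submodule ℝ ℝ)) :=
      Submodule.mem_pi.2 fun j hj => by simp [ne_of_mem_of_not_mem hj hi]
    simpa using h _ hmem
  · intro h v hv
    refine sum_eq_zero fun i _ => ?_
    by_cases hi : i ∈ T
    · simp [(Submodule.mem_bot ℝ).1 (Submodule.mem_pi.1 hv i hi)]
    · simp [h i hi]

variable {N E : Type} [Fintype E]

noncomputable def edgeDifference (s t : E → N) (q : N → ℝ) (e : E) : (N → ℝ) →ₗ[ℝ] ℝ :=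
  (q (s e))⁻¹ • LinearMap.proj (s e) - (q (t e))⁻¹ • LinearMap.proj (t e)

noncomputable def dissipation (s t : E → N) (r : E → ℝ) (q : N → ℝ) :
    QuadraticForm ℝ (N → ℝ) :=
  ∑ e, (r e * q (s e) / 4) •
    QuadraticMap.linMulLin (edgeDifference s t q e) (edgeDifference s t q e)

theorem dissipation_apply (s t : E → N) (r : E → ℝ) (q p : N → ℝ) :
    dissipation s t r q p
      = (1/4) * ∑ e, r e * q (s e) * (p (s e) / q (s e) - p (t e) / q (t e))^2 := by
  simp only [dissipation, _root_.sum_apply, _root_.smul_apply, QuadraticMap.linMulLin_apply,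
    edgeDifference, LinearMap.sub_apply, LinearMap.smul_apply, LinearMap.proj_apply,
    smul_eq_mul, mul_sum]
  exact sum_congr rfl fun e _ => by ring

theorem dissipation_nonneg (s t : E → N) (r : E → ℝ) (hr : ∀ e, 0 ≤ r e)
    (q : N → ℝ) (hq : ∀ i, 0 < q i) (v : N → ℝ) : 0 ≤ dissipation s t r q v := by
  rw [dissipation_apply]
  exact mul_nonneg (by norm_num) <| sum_nonneg fun e _ =>
    mul_nonneg (mul_nonneg (hr e) (hq (s e)).le) (sq_nonneg _)

theorem polar_dissipation (s t : E → N) (r : E → ℝ) (q p v : N → ℝ) :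
    QuadraticMap.polar (dissipation s t r q) p v
      = (1/2) * ∑ e, r e * q (s e) * (p (s e) / q (s e) - p (t e) / q (t e))
          * (v (s e) / q (s e) - v (t e) / q (t e)) := by
  simp only [QuadraticMap.polar, dissipation_apply, Pi.add_apply, mul_sum, ← sum_sub_distrib]
  exact sum_congr rfl fun e _ => by ring

variable [Fintype N] [DecidableEq N]

def DetailedBalance (s t : E → N) (r : E → ℝ) (q : N → ℝ) : Prop :=
  ∀ i j : N, ∑ e ∈ univ.filter (fun e => s e = i ∧ t e = j), r e * q i
    = ∑ e ∈ univ.filter (fun e => s e = j ∧ t e = i), r e * q j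

theorem sum_edges_eq_sum_pairs (s t : E → N) (g : E → ℝ) (F : N → N → ℝ) :
    ∑ e, g e * F (s e) (t e)
      = ∑ i, ∑ j, (∑ e ∈ univ.filter (fun e => s e = i ∧ t e = j), g e) * F i j := by
  rw [← sum_fiberwise univ s]
  refine sum_congr rfl fun i _ => ?_
  rw [← sum_fiberwise _ t]
  refine sum_congr rfl fun j _ => ?_
  rw [filter_filter, sum_mul]
  exact sum_congr rfl fun e he => by simp only [mem_filter] at he; rw [he.2.1, he.2.2]

theorem DetailedBalance.sum_edges_reverse {s t : E → N} {r : E → ℝ} {q : N → ℝ}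
    (h_db : DetailedBalance s t r q) (F : N → N → ℝ) :
    ∑ e, r e * q (s e) * F (s e) (t e) = ∑ e, r e * q (s e) * F (t e) (s e) := by
  have hflux : ∀ i j, ∑ e ∈ univ.filter (fun e => s e = i ∧ t e = j), r e * q (s e)
      = ∑ e ∈ univ.filter (fun e => s e = i ∧ t e = j), r e * q i := fun i j =>
    sum_congr rfl fun e he => by simp only [mem_filter] at he; rw [he.2.1]
  rw [sum_edges_eq_sum_pairs s t _ F, sum_edges_eq_sum_pairs s t _ (fun i j => F j i), sum_comm]
  simp only [hflux, h_db _ _]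

def IsGenerator (s t : E → N) (r : E → ℝ) (H : Matrix N N ℝ) : Prop :=
  (∀ i j, i ≠ j → H i j = ∑ e ∈ univ.filter (fun e => s e = j ∧ t e = i), r e) ∧
    ∀ i, H i i = -∑ e ∈ univ.filter (fun e => s e = i ∧ t e ≠ i), r e

omit [Fintype N] in
theorem IsGenerator.eq_sum {s t : E → N} {r : E → ℝ} {H : Matrix N N ℝ}
    (hH : IsGenerator s t r H) :
    H = ∑ e, r e • vecMulVec (Pi.single (t e) 1 - Pi.single (s e) 1) (Pi.single (s e) 1) := by
  ext i j
  simp only [Matrix.sum_apply, Matrix.smul_apply, vecMulVec_apply, Pi.sub_apply,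
    Pi.single_apply, smul_eq_mul]
  rcases eq_or_ne i j with rfl | hij
  · rw [hH.2, ← sum_neg_distrib, sum_filter]
    exact sum_congr rfl fun e _ => by split_ifs <;> grind
  · rw [hH.1 i j hij, sum_filter]
    exact sum_congr rfl fun e _ => by split_ifs <;> grind

theorem IsGenerator.dotProduct_mulVec {s t : E → N} {r : E → ℝ} {H : Matrix N N ℝ}
    (hH : IsGenerator s t r H) (u p : N → ℝ) :
    u ⬝ᵥ (H *ᵥ p) = ∑ e, r e * p (s e) * (u (t e) - u (s e)) := by
  rw [hH.eq_sum, sum_mulVec, dotProduct_sum]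
  refine sum_congr rfl fun e _ => ?_
  simp only [smul_mulVec, vecMulVec_mulVec, single_dotProduct, one_mul, op_smul_eq_smul,
    dotProduct_smul, dotProduct_sub, dotProduct_single, mul_one, smul_eq_mul]
  ring

theorem polar_dissipation_of_detailedBalance {s t : E → N} {r : E → ℝ} {q : N → ℝ}
    {H : Matrix N N ℝ} (hq : ∀ i, 0 < q i) (h_db : DetailedBalance s t r q)
    (hH : IsGenerator s t r H) (p v : N → ℝ) :
    QuadraticMap.polar (dissipation s t r q) p v = -(v ⬝ᵥ fun i => (H *ᵥ p) i / q i) := by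
  set a : N → ℝ := fun i => p i / q i
  set u : N → ℝ := fun i => v i / q i
  have hsym : ∑ e, r e * q (s e) * (a (s e) - a (t e)) * (u (s e) - u (t e))
      = 2 * ∑ e, r e * q (s e) * a (s e) * (u (s e) - u (t e)) := by
    calc _ = ∑ e, r e * q (s e) * a (s e) * (u (s e) - u (t e))
            + ∑ e, r e * q (s e) * (a (t e) * (u (t e) - u (s e))) := by
          rw [← sum_add_distrib]; exact sum_congr rfl fun e _ => by ring
      _ = _ := by
          rw [h_db.sum_edges_reverse (fun x y => a y * (u y - u x)), two_mul]
          exact congrArg _ (sum_congr rfl fun e _ => by ring)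
  have hflow : ∀ e, r e * q (s e) * a (s e) = r e * p (s e) := fun e => by
    simp only [a]; field_simp [(hq (s e)).ne']
  have hscale : (v ⬝ᵥ fun i => (H *ᵥ p) i / q i) = u ⬝ᵥ (H *ᵥ p) :=
    sum_congr rfl fun i _ => by simp only [u]; ring
  rw [polar_dissipation, hscale, hH.dotProduct_mulVec, hsym]
  simp only [hflow, mul_sum, ← sum_neg_distrib]
  exact sum_congr rfl fun e _ => by ring

/-- A population p obeys the master equation at all internal states iff it
minimizes the extended dissipation functional C subject to the constraint
that p agrees with itself on the terminals; equivalently, iff ∂C/∂p_i = 0 at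
all internal states i. -/
theorem steady_state_iff_minimum_dissipation
    {N E : Type} [Fintype N] [Fintype E] [DecidableEq N]
    (s t : E → N) (r : E → ℝ) (hr : ∀ e, 0 < r e)
    (q : N → ℝ) (hq : ∀ i, 0 < q i)
    (h_db : ∀ i j : N,
      ∑ e ∈ univ.filter (fun e => s e = i ∧ t e = j), r e * q i
        = ∑ e ∈ univ.filter (fun e => s e = j ∧ t e = i), r e * q j)
    (H : Matrix N N ℝ)
    (hH_off : ∀ i j, i ≠ j → H i j = ∑ e ∈ univ.filter (fun e => s e = j ∧ t e = i), r e)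
    (hH_diag : ∀ i, H i i = -∑ e ∈ univ.filter (fun e => s e = i ∧ t e ≠ i), r e)
    (C : (N → ℝ) → ℝ)
    (hC : ∀ p : N → ℝ,
      C p = (1/4) * ∑ e, r e * q (s e) * (p (s e) / q (s e) - p (t e) / q (t e))^2)
    (T : Set N) (p : N → ℝ) :
    ((∀ i ∉ T, ∑ j, H i j * p j = 0) ↔
        (∀ p' : N → ℝ, (∀ i ∈ T, p' i = p i) → C p ≤ C p'))
    ∧ ((∀ i ∉ T, ∑ j, H i j * p j = 0) ↔
        (∀ i ∉ T, fderiv ℝ C p (Pi.single i 1) = 0)) := by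
  obtain rfl : C = dissipation s t r q :=
    funext fun p' => (hC p').trans (dissipation_apply s t r q p').symm
  set g : N → ℝ := fun i => (H *ᵥ p) i / q i
  have hpolar : ∀ v, QuadraticMap.polar (dissipation s t r q) p v = 0 ↔ v ⬝ᵥ g = 0 := fun v => by
    rw [polar_dissipation_of_detailedBalance hq h_db ⟨hH_off, hH_diag⟩, neg_eq_zero]
  have hstationary : (∀ i ∉ T, (H *ᵥ p) i = 0) ↔ ∀ i ∉ T, g i = 0 := by
    simp only [g, div_eq_zero_iff, (hq _).ne', or_false]
  have hdiff : DifferentiableAt ℝ (dissipation s t r q) p := by rw [funext hC]; fun_prop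
  refine ⟨hstationary.trans ?_, hstationary.trans ?_⟩
  · rw [← forall_mem_pi_bot_dotProduct_eq_zero_iff]
    simp only [← hpolar]
    rw [← QuadraticMap.isMinOn_iff_polar_eq_zero _
      (dissipation_nonneg s t r (fun e => (hr e).le) q hq), isMinOn_iff]
    simp [Submodule.mem_pi, sub_eq_zero]
  · simp only [QuadraticMap.fderiv_apply_eq_polar _ hdiff, hpolar, single_dotProduct, one_mul]
end

section
/- Let C : ℝ^N → ℝ be the extended dissipation functional of a detailed balanced Markov process, and let g be the metric on ℝ^N with g(e_m, e_n) = q_n^{-1} if m = n and 0 otherwise. Then the gradient flow equation dp/dt = −∇_g C(p), where ∇_g is the gradient with respect to g, coincides with the master equation dp/dt = Hp. -/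
/-!
Write `x = p / q`, `w e = r e * q (s e)` and `δ i = [i = n]`. Detailed balance says that `w`
is invariant under reversing edges: `∑ e, w e * f (s e) (t e) = ∑ e, w e * f (t e) (s e)`
for every `f`. Now `(H p) n = ∑ e, w e * x (s e) * (δ (t e) - δ (s e))`, and
`-(∇_g C p) n = ½ ∑ e, w e * (x (s e) - x (t e)) * (δ (t e) - δ (s e))` is the
symmetrisation of that sum under edge reversal, hence equal to it.
-/

open Finset

section EdgeSums

variable {N E : Type} [Fintype N] [Fintype E] [DecidableEq N] (s t : E → N)

theorem sum_mul_eq_sum_sum_fiber (a : E → ℝ) (g : N → N → ℝ) :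
    ∑ e, a e * g (s e) (t e)
      = ∑ i, ∑ j, g i j * ∑ e ∈ univ.filter (fun e => s e = i ∧ t e = j), a e := by
  rw [← sum_fiberwise univ s]
  refine sum_congr rfl fun i _ => ?_
  rw [← sum_fiberwise _ t]
  refine sum_congr rfl fun j _ => ?_
  rw [filter_filter, mul_sum]
  refine sum_congr rfl fun e he => ?_
  obtain ⟨rfl, rfl⟩ := (mem_filter.1 he).2
  ring

theorem sum_mul_eq_sum_mul_swap_of_detailed_balance (r : E → ℝ) (q : N → ℝ)
    (h_db : ∀ i j : N,
      ∑ e ∈ univ.filter (fun e => s e = i ∧ t e = j), r e * q i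
        = ∑ e ∈ univ.filter (fun e => s e = j ∧ t e = i), r e * q j)
    (f : N → N → ℝ) :
    ∑ e, r e * q (s e) * f (s e) (t e) = ∑ e, r e * q (s e) * f (t e) (s e) := by
  have h_fiber : ∀ i j, ∑ e ∈ univ.filter (fun e => s e = i ∧ t e = j), r e * q (s e)
      = ∑ e ∈ univ.filter (fun e => s e = i ∧ t e = j), r e * q i :=
    fun i j => sum_congr rfl fun e he => by rw [(mem_filter.1 he).2.1]
  rw [sum_mul_eq_sum_sum_fiber s t _ f, sum_mul_eq_sum_sum_fiber s t _ (fun i j => f j i)]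
  conv_rhs => rw [sum_comm]
  simp only [h_fiber]
  exact sum_congr rfl fun i _ => sum_congr rfl fun j _ => by rw [h_db]

end EdgeSums

theorem hasFDerivAt_sum_mul_sq {ι F : Type*} [Fintype ι] [NormedAddCommGroup F]
    [NormedSpace ℝ F] (c : ι → ℝ) (L : ι → F →L[ℝ] ℝ) (p : F) :
    HasFDerivAt (fun p => ∑ i, c i * L i p ^ 2) (∑ i, (2 * c i * L i p) • L i) p := by
  refine HasFDerivAt.fun_sum fun i _ => ?_
  refine (((L i).hasFDerivAt.pow 2).const_mul (c i)).congr_fderiv ?_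
  rw [smul_smul]
  congr 1
  simp only [nsmul_eq_mul]
  ring

section MarkovProcess

variable {N E : Type} [Fintype E] [DecidableEq N] (s t : E → N) (r : E → ℝ)

theorem mul_fderiv_apply_single_of_eq_dissipation [Fintype N] (q : N → ℝ) (hq : ∀ i, q i ≠ 0)
    {C : (N → ℝ) → ℝ}
    (hC : ∀ p : N → ℝ,
      C p = (1/4) * ∑ e, r e * q (s e) * (p (s e) / q (s e) - p (t e) / q (t e))^2)
    (p : N → ℝ) (n : N) :
    q n * fderiv ℝ C p (Pi.single n 1)
      = 1/2 * ∑ e, r e * q (s e) * ((p (s e) / q (s e) - p (t e) / q (t e))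
          * ((if s e = n then 1 else 0) - if t e = n then 1 else 0)) := by
  set L : E → (N → ℝ) →L[ℝ] ℝ := fun e =>
    (q (s e))⁻¹ • ContinuousLinearMap.proj (s e) - (q (t e))⁻¹ • ContinuousLinearMap.proj (t e)
  have hL : ∀ e p, L e p = p (s e) / q (s e) - p (t e) / q (t e) := fun e p => by
    simp [L, div_eq_inv_mul]
  have hC_L : C = fun p => 1/4 * ∑ e, r e * q (s e) * L e p ^ 2 :=
    funext fun p => by simp only [hC, hL]
  rw [hC_L, ((hasFDerivAt_sum_mul_sq _ L p).const_mul (1/4)).fderiv]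
  simp only [smul_apply, _root_.sum_apply, smul_eq_mul, mul_sum]
  refine sum_congr rfl fun e _ => ?_
  simp only [hL, Pi.single_apply]
  split_ifs with hs ht ht <;> subst_vars <;> (try rw [ht]) <;> field_simp [hq] <;> ring

theorem eq_sum_smul_single_sub_single (H : Matrix N N ℝ)
    (hH_off : ∀ i j, i ≠ j → H i j = ∑ e ∈ univ.filter (fun e => s e = j ∧ t e = i), r e)
    (hH_diag : ∀ i, H i i = -∑ e ∈ univ.filter (fun e => s e = i ∧ t e ≠ i), r e) :
    H = ∑ e, r e • (Matrix.single (t e) (s e) 1 - Matrix.single (s e) (s e) 1) := by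
  ext i j
  simp only [Matrix.sum_apply, Matrix.smul_apply, Matrix.sub_apply, Matrix.single_apply,
    smul_eq_mul]
  by_cases hij : i = j
  · subst hij
    rw [hH_diag, sum_filter, ← sum_neg_distrib]
    refine sum_congr rfl fun e _ => ?_
    by_cases hs : s e = i <;> by_cases ht : t e = i <;> simp [hs, ht]
  · rw [hH_off i j hij, sum_filter]
    refine sum_congr rfl fun e _ => ?_
    by_cases hs : s e = j <;> by_cases ht : t e = i <;> simp [hs, ht, Ne.symm hij]

theorem sum_smul_single_sub_single_mulVec_apply [Fintype N] (p : N → ℝ) (n : N) :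
    (∑ e, r e • (Matrix.single (t e) (s e) (1 : ℝ) - Matrix.single (s e) (s e) 1)).mulVec p n
      = ∑ e, r e * p (s e) * ((if t e = n then 1 else 0) - if s e = n then 1 else 0) := by
  simp only [Matrix.sum_mulVec, Matrix.smul_mulVec, Matrix.sub_mulVec, Matrix.single_mulVec,
    Finset.sum_apply, Pi.smul_apply, Pi.sub_apply, Function.update_apply, smul_eq_mul]
  refine sum_congr rfl fun e _ => ?_
  simp only [eq_comm (a := n)]
  split_ifs <;> simp

end MarkovProcess

theorem gradient_flow_is_master_equation_general
    {N E : Type} [Fintype N] [Fintype E] [DecidableEq N]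
    (s t : E → N) (r : E → ℝ)
    (q : N → ℝ) (hq : ∀ i, 0 < q i)
    (h_db : ∀ i j : N,
      ∑ e ∈ univ.filter (fun e => s e = i ∧ t e = j), r e * q i
        = ∑ e ∈ univ.filter (fun e => s e = j ∧ t e = i), r e * q j)
    (H : Matrix N N ℝ)
    (hH_off : ∀ i j, i ≠ j → H i j = ∑ e ∈ univ.filter (fun e => s e = j ∧ t e = i), r e)
    (hH_diag : ∀ i, H i i = -∑ e ∈ univ.filter (fun e => s e = i ∧ t e ≠ i), r e)
    (C : (N → ℝ) → ℝ)
    (hC : ∀ p : N → ℝ,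
      C p = (1/4) * ∑ e, r e * q (s e) * (p (s e) / q (s e) - p (t e) / q (t e))^2)
    (gradC : (N → ℝ) → N → ℝ)
    (hgrad : ∀ p n, gradC p n = q n * fderiv ℝ C p (Pi.single n 1)) :
    ∀ p : N → ℝ, ∀ n, -gradC p n = H.mulVec p n := by
  intro p n
  have hq_ne : ∀ i, q i ≠ 0 := fun i => (hq i).ne'
  set δ : N → ℝ := fun i => if i = n then 1 else 0
  have h_swap := sum_mul_eq_sum_mul_swap_of_detailed_balance s t r q h_db
    fun i j => p i / q i * (δ j - δ i)
  calc -gradC p n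
      = 1/2 * (∑ e, r e * q (s e) * (p (s e) / q (s e) * (δ (t e) - δ (s e)))
          + ∑ e, r e * q (s e) * (p (t e) / q (t e) * (δ (s e) - δ (t e)))) := by
        rw [hgrad, mul_fderiv_apply_single_of_eq_dissipation s t r q hq_ne hC,
          ← sum_add_distrib, mul_sum, mul_sum, ← sum_neg_distrib]
        exact sum_congr rfl fun e _ => by ring
    _ = ∑ e, r e * p (s e) * (δ (t e) - δ (s e)) := by
        rw [← h_swap, ← two_mul, ← mul_assoc, one_div_mul_cancel two_ne_zero, one_mul]
        exact sum_congr rfl fun e _ => by field_simp [hq_ne]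
    _ = H.mulVec p n := by
        rw [eq_sum_smul_single_sub_single s t r H hH_off hH_diag,
          sum_smul_single_sub_single_mulVec_apply]

/-- For a detailed balanced Markov process with extended dissipation
functional C and the metric g with g(e_m, e_n) = δ_{mn} q_n⁻¹, the gradient
flow equation dp/dt = −∇_g C(p) coincides with the master equation
dp/dt = Hp: the g-gradient of C, whose components are (∇_g C)_n = q_n ∂C/∂p_n,
satisfies −(∇_g C(p))_n = (Hp)_n for every population p and state n. -/
theorem gradient_flow_is_master_equation
    {N E : Type} [Fintype N] [Fintype E] [DecidableEq N]
    (s t : E → N) (r : E → ℝ) (hr : ∀ e, 0 < r e)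
    (q : N → ℝ) (hq : ∀ i, 0 < q i)
    (h_db : ∀ i j : N,
      ∑ e ∈ univ.filter (fun e => s e = i ∧ t e = j), r e * q i
        = ∑ e ∈ univ.filter (fun e => s e = j ∧ t e = i), r e * q j)
    (H : Matrix N N ℝ)
    (hH_off : ∀ i j, i ≠ j → H i j = ∑ e ∈ univ.filter (fun e => s e = j ∧ t e = i), r e)
    (hH_diag : ∀ i, H i i = -∑ e ∈ univ.filter (fun e => s e = i ∧ t e ≠ i), r e)
    (C : (N → ℝ) → ℝ)
    (hC : ∀ p : N → ℝ,
      C p = (1/4) * ∑ e, r e * q (s e) * (p (s e) / q (s e) - p (t e) / q (t e))^2)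
    (gradC : (N → ℝ) → N → ℝ)
    (hgrad : ∀ p n, gradC p n = q n * fderiv ℝ C p (Pi.single n 1)) :
    ∀ p : N → ℝ, ∀ n, -gradC p n = H.mulVec p n :=
  gradient_flow_is_master_equation_general s t r q hq h_db H hH_off hH_diag C hC gradC hgrad
end
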